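/- arXiv:2005.01017 — 4 statements merged into one kernel-verified Lean document; each statement's English description precedes it below -/
import Mathlib

section
/- For all x, y ≥ 0 and real p with b+1 ≤ a ≤ (p+1)/2 (and b ≥ 0), one has x^a y^{p-a} + x^{p-a} y^a ≤ x^b y^{p-b} + x^{p-b} y^b. -/
open Real

lemma poly_ineq_aux (x y a b p : ℝ) (hy : 0 < y) (hxy : y ≤ x)
    (hb : 0 ≤ b) (hab : b + 1 ≤ a) (hba : b ≤ p - a) :
    x ^ a * y ^ (p - a) + x ^ (p - a) * y ^ a ≤
      x ^ b * y ^ (p - b) + x ^ (p - b) * y ^ b := by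
  have hx : 0 < x := lt_of_lt_of_le hy hxy
  have hab' : (0:ℝ) ≤ a - b := by linarith
  have hpab : (0:ℝ) ≤ p - a - b := by linarith
  have ex1 : x ^ a = x ^ b * x ^ (a - b) := by
    rw [← Real.rpow_add hx]; congr 1; ring
  have ex2 : x ^ (p - a) = x ^ b * x ^ (p - a - b) := by
    rw [← Real.rpow_add hx]; congr 1; ring
  have ex3 : x ^ (p - b) = x ^ b * x ^ (a - b) * x ^ (p - a - b) := by
    rw [← Real.rpow_add hx, ← Real.rpow_add hx]; congr 1; ring
  have ey1 : y ^ a = y ^ b * y ^ (a - b) := by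
    rw [← Real.rpow_add hy]; congr 1; ring
  have ey2 : y ^ (p - a) = y ^ b * y ^ (p - a - b) := by
    rw [← Real.rpow_add hy]; congr 1; ring
  have ey3 : y ^ (p - b) = y ^ b * y ^ (a - b) * y ^ (p - a - b) := by
    rw [← Real.rpow_add hy, ← Real.rpow_add hy]; congr 1; ring
  rw [ex1, ex2, ex3, ey1, ey2, ey3]
  have h1 : y ^ (a - b) ≤ x ^ (a - b) := Real.rpow_le_rpow hy.le hxy hab'
  have h2 : y ^ (p - a - b) ≤ x ^ (p - a - b) := Real.rpow_le_rpow hy.le hxy hpab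
  have hxb : (0:ℝ) < x ^ b := Real.rpow_pos_of_pos hx b
  have hyb : (0:ℝ) < y ^ b := Real.rpow_pos_of_pos hy b
  nlinarith [mul_nonneg (sub_nonneg.2 h1) (sub_nonneg.2 h2),
    mul_pos hxb hyb, Real.rpow_nonneg hy.le (a - b), Real.rpow_nonneg hy.le (p - a - b)]

lemma poly_ineq_zero (y a b p : ℝ) (hy : 0 ≤ y)
    (hb : 0 ≤ b) (hab : b + 1 ≤ a) (hba : b ≤ p - a) :
    (0:ℝ) ^ a * y ^ (p - a) + (0:ℝ) ^ (p - a) * y ^ a ≤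
      (0:ℝ) ^ b * y ^ (p - b) + (0:ℝ) ^ (p - b) * y ^ b := by
  have ha0 : a ≠ 0 := by intro h; linarith [h ▸ hab]
  have hpb0 : p - b ≠ 0 := by intro h; linarith
  rw [Real.zero_rpow ha0, Real.zero_rpow hpb0, zero_mul, zero_mul, zero_add, add_zero]
  rcases eq_or_lt_of_le (show (0:ℝ) ≤ p - a by linarith) with hpa0 | hpa0
  · have hb0 : b = 0 := le_antisymm (hpa0 ▸ hba) hb
    have hpa : p = a := by linarith
    rw [← hpa0, hb0, Real.rpow_zero, hpa, sub_zero]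
  · rw [Real.zero_rpow hpa0.ne', zero_mul]
    exact mul_nonneg (Real.rpow_nonneg le_rfl b) (Real.rpow_nonneg hy _)

theorem polynomial_inequality_II (x y a b p : ℝ) (hx : 0 ≤ x) (hy : 0 ≤ y)
    (hb : 0 ≤ b) (hab : b + 1 ≤ a) (hap : a ≤ (p + 1) / 2) :
    x ^ a * y ^ (p - a) + x ^ (p - a) * y ^ a ≤
      x ^ b * y ^ (p - b) + x ^ (p - b) * y ^ b := by
  have hba : b ≤ p - a := by linarith
  rcases eq_or_lt_of_le hx with hx0 | hx0
  · rw [← hx0]; exact poly_ineq_zero y a b p hy hb hab hba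
  rcases eq_or_lt_of_le hy with hy0 | hy0
  · rw [← hy0]
    have := poly_ineq_zero x a b p hx hb hab hba
    linarith [this]
  rcases le_total y x with h | h
  · exact poly_ineq_aux x y a b p hy0 h hb hab hba
  · have := poly_ineq_aux y x a b p hx0 h hb hab hba
    linarith [this]
end

section
/- For p > 1 and all x, y > 0, (x+y)^p − x^p − y^p ≤ Σ_{n=1}^{n_p} C(p,n)·(x^n y^{p-n} + x^{p-n} y^n), where n_p = ⌊(p+1)/2⌋ and C(p,n) denotes the generalized binomial coefficient. -/
open Real Finset

noncomputable def Cb (p : ℝ) (n : ℕ) : ℝ := (∏ i ∈ Finset.range n, (p - (i : ℝ))) / (Nat.factorial n : ℝ)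

lemma Cb_nonneg (p : ℝ) (n : ℕ) (h : (n : ℝ) - 1 ≤ p) : 0 ≤ Cb p n := by
  apply div_nonneg _ (Nat.cast_nonneg _)
  apply Finset.prod_nonneg
  intro i hi
  have : (i : ℝ) ≤ (n : ℝ) - 1 := by
    have := Finset.mem_range.1 hi
    have : (i : ℝ) + 1 ≤ n := by exact_mod_cast this
    linarith
  linarith

lemma Cb_zero (p : ℝ) : Cb p 0 = 1 := by simp [Cb]

lemma Cb_succ_mul (q : ℝ) (n : ℕ) : Cb q (n+1) * ((n:ℝ)+1) = q * Cb (q-1) n := by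
  have h1 : ∏ i ∈ Finset.range (n+1), (q - (i:ℝ)) =
      (∏ i ∈ Finset.range n, ((q-1) - (i:ℝ))) * q := by
    rw [Finset.prod_range_succ']
    congr 1
    · exact Finset.prod_congr rfl fun i _ => by push_cast; ring
    · simp
  have hf : ((n+1).factorial : ℝ) = ((n:ℝ)+1) * (n.factorial : ℝ) := by
    rw [Nat.factorial_succ]; push_cast; ring
  have hn0 : ((n.factorial : ℝ)) ≠ 0 := by positivity
  have hn1 : ((n:ℝ)+1) ≠ 0 := by positivity
  simp only [Cb, h1, hf]
  field_simp

lemma taylor_bound (M : ℕ) : ∀ q : ℝ, (M : ℝ) - 1 < q → q ≤ M → ∀ t : ℝ, 0 ≤ t →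
    (1 + t) ^ q ≤ ∑ n ∈ Finset.range (M+1), Cb q n * t ^ n := by
  induction M with
  | zero =>
    intro q h1 h2 t ht
    have h1t : (1:ℝ) ≤ 1 + t := by linarith
    simp only [Nat.cast_zero] at h2
    calc (1+t) ^ q ≤ 1 := Real.rpow_le_one_of_one_le_of_nonpos h1t h2
      _ = ∑ n ∈ Finset.range 1, Cb q n * t ^ n := by simp [Cb]
  | succ M ih =>
    intro q h1 h2 t ht
    have hMq : (M : ℝ) < q := by push_cast at h1; linarith
    have hq0 : 0 < q := lt_of_le_of_lt (Nat.cast_nonneg M) hMq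
    set g : ℝ → ℝ := fun s => (∑ n ∈ Finset.range (M+2), Cb q n * s ^ n) - (1+s) ^ q with hg
    have hderiv : ∀ s : ℝ, 0 ≤ s → HasDerivAt g
        (q * ((∑ n ∈ Finset.range (M+1), Cb (q-1) n * s ^ n) - (1+s) ^ (q-1))) s := by
      intro s hs
      have h1s : (0:ℝ) < 1 + s := by linarith
      have hpoly : HasDerivAt (fun u : ℝ => ∑ n ∈ Finset.range (M+2), Cb q n * u ^ n)
          (∑ n ∈ Finset.range (M+2), Cb q n * ((n:ℝ) * s ^ (n-1))) s := by
        apply HasDerivAt.fun_sum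
        intro n _
        exact (hasDerivAt_pow n s).const_mul (Cb q n)
      have hrpow : HasDerivAt (fun u : ℝ => (1+u) ^ q) (q * (1+s) ^ (q-1) * 1) s := by
        exact (Real.hasDerivAt_rpow_const (Or.inl h1s.ne')).comp s
          ((hasDerivAt_id s).const_add 1)
      have key : ∑ n ∈ Finset.range (M+2), Cb q n * ((n:ℝ) * s ^ (n-1)) =
          q * ∑ n ∈ Finset.range (M+1), Cb (q-1) n * s ^ n := by
        rw [Finset.sum_range_succ', Finset.mul_sum]
        simp only [Nat.cast_zero, zero_mul, mul_zero, add_zero, Nat.add_sub_cancel]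
        apply Finset.sum_congr rfl
        intro n _
        have h := Cb_succ_mul q n
        push_cast
        rw [← mul_assoc, h, mul_assoc]
      have := hpoly.sub hrpow
      rw [key] at this
      convert this using 1
      · rfl
      · rfl
      · rfl
      · ring
    have hg0 : g 0 = 0 := by
      simp only [hg]
      rw [Finset.sum_range_succ']
      simp [Cb]
    have hcont : Continuous g := by
      apply Continuous.sub
      · exact continuous_finset_sum _ fun n _ => continuous_const.mul (continuous_pow n)
      · exact (continuous_const.add continuous_id).rpow_const fun x => Or.inr hq0.le
    have hmono : MonotoneOn g (Set.Ici 0) := by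
      apply monotoneOn_of_deriv_nonneg (convex_Ici 0) hcont.continuousOn
      · intro s hs
        rw [interior_Ici] at hs
        exact ((hderiv s (le_of_lt hs)).differentiableAt).differentiableWithinAt
      · intro s hs
        rw [interior_Ici] at hs
        rw [(hderiv s (le_of_lt hs)).deriv]
        have hih := ih (q-1) (by linarith) (by push_cast at h2; linarith) s (le_of_lt hs)
        exact mul_nonneg hq0.le (by linarith)
    have := hmono (Set.self_mem_Ici) (Set.mem_Ici.2 ht) ht
    rw [hg0] at this
    simp only [hg] at this
    have h22 : M + 2 = M + 1 + 1 := rfl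
    rw [h22] at this ⊢
    linarith

lemma refl_prod (m d : ℕ) :
    ∏ k ∈ Finset.range d, ((m:ℝ) + (d:ℝ) - (k:ℝ)) = ∏ k ∈ Finset.range d, ((m:ℝ) + (k:ℝ) + 1) := by
  rw [← Finset.prod_range_reflect (fun k => (m:ℝ) + (k:ℝ) + 1) d]
  apply Finset.prod_congr rfl
  intro j hj
  have hj' : j < d := Finset.mem_range.1 hj
  have h1 : ((d - 1 - j : ℕ) : ℝ) = (d:ℝ) - 1 - (j:ℝ) := by
    have : ((d - 1 - j : ℕ)) + (j + 1) = d := by omega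
    have := congrArg (fun k : ℕ => (k:ℝ)) this
    push_cast at this
    linarith
  rw [h1]
  ring

lemma Cb_le_one (p : ℝ) (M : ℕ) (h1 : p ≤ M) (h2 : (M:ℝ) ≤ p + 1) : Cb p M ≤ 1 := by
  have hMf : (0:ℝ) < (Nat.factorial M : ℝ) := by positivity
  rw [Cb, div_le_one hMf]
  calc ∏ i ∈ Finset.range M, (p - (i:ℝ)) ≤ ∏ i ∈ Finset.range M, ((M:ℝ) - (i:ℝ)) := by
        apply Finset.prod_le_prod
        · intro i hi
          have hi' : i < M := Finset.mem_range.1 hi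
          have : (i:ℝ) + 1 ≤ M := by exact_mod_cast hi'
          linarith
        · intro i hi; linarith
    _ = (Nat.factorial M : ℝ) := by
        have := refl_prod 0 M
        simp only [Nat.cast_zero, zero_add] at this
        rw [this, ← Finset.prod_range_add_one_eq_factorial]
        push_cast
        rfl

lemma Cb_anti (p : ℝ) (m n : ℕ) (hmn : m ≤ n) (hn : (n:ℝ) ≤ p) (hp : p ≤ (n:ℝ) + (m:ℝ)) :
    Cb p n ≤ Cb p m := by
  obtain ⟨d, rfl⟩ : ∃ d, n = m + d := ⟨n - m, by omega⟩
  push_cast at hn hp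
  have hA : ∏ i ∈ Finset.range (m+d), (p - (i:ℝ)) =
      (∏ i ∈ Finset.range m, (p - (i:ℝ))) * ∏ k ∈ Finset.range d, (p - ((m:ℝ) + (k:ℝ))) := by
    rw [Finset.prod_range_add]
    congr 1
    exact Finset.prod_congr rfl fun k _ => by push_cast; ring
  have hfact : (((m+d).factorial : ℕ) : ℝ) =
      (Nat.factorial m : ℝ) * ∏ k ∈ Finset.range d, ((m:ℝ) + (k:ℝ) + 1) := by
    have hNat : (m+d).factorial = m.factorial * ∏ k ∈ Finset.range d, (m + k + 1) := by
      rw [← Finset.prod_range_add_one_eq_factorial, Finset.prod_range_add,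
        Finset.prod_range_add_one_eq_factorial]
    rw [hNat]
    push_cast
    ring
  have hBpos : (0:ℝ) < ∏ k ∈ Finset.range d, ((m:ℝ) + (k:ℝ) + 1) := by positivity
  have hmf : (0:ℝ) < (Nat.factorial m : ℝ) := by positivity
  have key : Cb p (m+d) = Cb p m *
      ((∏ k ∈ Finset.range d, (p - ((m:ℝ) + (k:ℝ)))) / (∏ k ∈ Finset.range d, ((m:ℝ) + (k:ℝ) + 1))) := by
    rw [Cb, Cb, hA, hfact]
    field_simp
    try ring
  rw [key]
  apply mul_le_of_le_one_right (Cb_nonneg p m (by linarith))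
  rw [div_le_one hBpos]
  calc ∏ k ∈ Finset.range d, (p - ((m:ℝ) + (k:ℝ)))
      ≤ ∏ k ∈ Finset.range d, ((m:ℝ) + (d:ℝ) - (k:ℝ)) := by
        apply Finset.prod_le_prod
        · intro k hk
          have hk' : k < d := Finset.mem_range.1 hk
          have : (k:ℝ) + 1 ≤ d := by exact_mod_cast hk'
          linarith
        · intro k hk; linarith
    _ = _ := refl_prod m d

lemma lemB (p : ℝ) (hp : 1 < p) (t : ℝ) (ht0 : 0 < t) (ht1 : t ≤ 1) :
    ∑ n ∈ Finset.range (⌈p⌉₊ + 1), Cb p n * t ^ n ≤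
      1 + t ^ p + ∑ n ∈ Finset.Icc 1 ⌊(p+1)/2⌋₊, Cb p n * (t ^ (n:ℝ) + t ^ (p - (n:ℝ))) := by
  set M := ⌈p⌉₊ with hM
  set np := ⌊(p+1)/2⌋₊ with hnp
  have hp0 : (0:ℝ) ≤ p := by linarith
  have hpM : p ≤ M := Nat.le_ceil p
  have hMp : (M:ℝ) < p + 1 := Nat.ceil_lt_add_one hp0
  have hnp1 : 1 ≤ np := Nat.le_floor (by push_cast; linarith)
  have hnpp : (np:ℝ) ≤ (p+1)/2 := Nat.floor_le (by linarith)
  have hnpM : np + 1 ≤ M := by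
    have h1 : (np:ℝ) < (M:ℝ) := by linarith
    exact Nat.succ_le_of_lt (by exact_mod_cast h1)
  have hfl : (p+1)/2 < (np:ℝ) + 1 := Nat.lt_floor_add_one _
  have hMle : M ≤ 2*np + 1 := Nat.ceil_le.2 (by push_cast; linarith)
  -- rewrite Icc as Ico
  have hIcc : Finset.Icc 1 np = Finset.Ico 1 (np+1) := (Finset.Ico_add_one_right_eq_Icc 1 np).symm
  rw [hIcc]
  -- split the sums
  rw [Finset.range_eq_Ico,
    ← Finset.sum_Ico_consecutive (fun n => Cb p n * t ^ n) (Nat.zero_le 1) (by omega : 1 ≤ M + 1),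
    ← Finset.sum_Ico_consecutive (fun n => Cb p n * t ^ n) (by omega : 1 ≤ np + 1) (by omega : np + 1 ≤ M + 1),
    Finset.sum_Ico_succ_top (by omega : np + 1 ≤ M)]
  have h0 : ∑ n ∈ Finset.Ico 0 1, Cb p n * t ^ n = 1 := by simp [Cb]
  rw [h0]
  -- distribute RHS sum
  have hdist : ∑ n ∈ Finset.Ico 1 (np+1), Cb p n * (t ^ (n:ℝ) + t ^ (p - (n:ℝ))) =
      ∑ n ∈ Finset.Ico 1 (np+1), Cb p n * t ^ n
      + ∑ n ∈ Finset.Ico 1 (np+1), Cb p n * t ^ (p - (n:ℝ)) := by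
    rw [← Finset.sum_add_distrib]
    apply Finset.sum_congr rfl
    intro n _
    rw [Real.rpow_natCast]
    ring
  rw [hdist]
  -- remains: middle sum + top term ≤ t^p + mirror sum
  have htop : Cb p M * t ^ M ≤ t ^ p := by
    calc Cb p M * t ^ M ≤ 1 * t ^ M :=
          mul_le_mul_of_nonneg_right (Cb_le_one p M hpM hMp.le) (by positivity)
      _ = t ^ (M:ℝ) := by rw [one_mul, Real.rpow_natCast]
      _ ≤ t ^ p := Real.rpow_le_rpow_of_exponent_ge ht0 ht1 hpM
  have hmid : ∑ n ∈ Finset.Ico (np+1) M, Cb p n * t ^ n ≤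
      ∑ n ∈ Finset.Ico 1 (np+1), Cb p n * t ^ (p - (n:ℝ)) := by
    have step1 : ∑ n ∈ Finset.Ico (np+1) M, Cb p n * t ^ n ≤
        ∑ n ∈ Finset.Ico (np+1) M, Cb p (M-n) * t ^ (p - ((M-n : ℕ):ℝ)) := by
      apply Finset.sum_le_sum
      intro n hn
      obtain ⟨hn1, hn2⟩ := Finset.mem_Ico.1 hn
      have hcast : ((M - n : ℕ):ℝ) = (M:ℝ) - (n:ℝ) := by
        push_cast [Nat.cast_sub (le_of_lt hn2)]; ring
      have hnr : (n:ℝ) + 1 ≤ (M:ℝ) := by exact_mod_cast hn2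
      have hnpr : (np:ℝ) + 1 ≤ (n:ℝ) := by exact_mod_cast hn1
      have hMnr : (2:ℝ)*np + 1 ≥ (M:ℝ) := by exact_mod_cast hMle
      have hCb : Cb p n ≤ Cb p (M-n) := by
        apply Cb_anti p (M-n) n (by omega) (by linarith) (by rw [hcast]; linarith)
      have hCbnn : 0 ≤ Cb p (M-n) := Cb_nonneg p (M-n) (by rw [hcast]; linarith)
      have hexp : t ^ (n:ℝ) ≤ t ^ (p - ((M-n:ℕ):ℝ)) := by
        apply Real.rpow_le_rpow_of_exponent_ge ht0 ht1
        rw [hcast]; linarith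
      calc Cb p n * t ^ n ≤ Cb p (M-n) * t ^ n :=
            mul_le_mul_of_nonneg_right hCb (by positivity)
        _ = Cb p (M-n) * t ^ (n:ℝ) := by rw [Real.rpow_natCast]
        _ ≤ Cb p (M-n) * t ^ (p - ((M-n:ℕ):ℝ)) := mul_le_mul_of_nonneg_left hexp hCbnn
    have step2 : ∑ n ∈ Finset.Ico (np+1) M, Cb p (M-n) * t ^ (p - ((M-n : ℕ):ℝ)) =
        ∑ m ∈ Finset.Ico 1 (M-np), Cb p m * t ^ (p - (m:ℝ)) := by
      apply Finset.sum_nbij' (fun n => M - n) (fun m => M - m)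
      · intro a ha; obtain ⟨h1, h2⟩ := Finset.mem_Ico.1 ha; exact Finset.mem_Ico.2 (by omega)
      · intro a ha; obtain ⟨h1, h2⟩ := Finset.mem_Ico.1 ha; exact Finset.mem_Ico.2 (by omega)
      · intro a ha; obtain ⟨h1, h2⟩ := Finset.mem_Ico.1 ha; omega
      · intro a ha; obtain ⟨h1, h2⟩ := Finset.mem_Ico.1 ha; omega
      · intro a ha; rfl
    have step3 : ∑ m ∈ Finset.Ico 1 (M-np), Cb p m * t ^ (p - (m:ℝ)) ≤
        ∑ n ∈ Finset.Ico 1 (np+1), Cb p n * t ^ (p - (n:ℝ)) := by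
      apply Finset.sum_le_sum_of_subset_of_nonneg
      · apply Finset.Ico_subset_Ico le_rfl (by omega)
      · intro m hm _
        obtain ⟨h1, h2⟩ := Finset.mem_Ico.1 hm
        have : (m:ℝ) ≤ np := by exact_mod_cast Nat.lt_succ_iff.1 h2
        have hCbnn : 0 ≤ Cb p m := Cb_nonneg p m (by linarith)
        positivity
    calc _ ≤ _ := step1
      _ = _ := step2
      _ ≤ _ := step3
  linarith

lemma aux_main (p : ℝ) (hp : 1 < p) (x y : ℝ) (hx : 0 < x) (hy : 0 < y) (hxy : y ≤ x) :
    (x + y) ^ p - x ^ p - y ^ p ≤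
      ∑ n ∈ Finset.Icc 1 (⌊(p + 1) / 2⌋₊), Cb p n *
          (x ^ (n : ℝ) * y ^ (p - (n : ℝ)) + x ^ (p - (n : ℝ)) * y ^ (n : ℝ)) := by
  set t : ℝ := y / x with htd
  have ht0 : 0 < t := div_pos hy hx
  have ht1 : t ≤ 1 := by rw [htd, div_le_one hx]; exact hxy
  have hp0 : (0:ℝ) ≤ p := by linarith
  have hA := taylor_bound ⌈p⌉₊ p (by linarith [Nat.ceil_lt_add_one hp0]) (Nat.le_ceil p) t ht0.le
  have hchain := hA.trans (lemB p hp t ht0 ht1)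
  have hxp : (0:ℝ) < x ^ p := Real.rpow_pos_of_pos hx p
  have hmul := mul_le_mul_of_nonneg_left hchain hxp.le
  -- x^p * (y/x)^c = x^(p-c) * y^c
  have hterm : ∀ c : ℝ, x ^ p * t ^ c = x ^ (p - c) * y ^ c := by
    intro c
    rw [htd, Real.div_rpow hy.le hx.le, Real.rpow_sub hx]
    have hxc : x ^ c ≠ 0 := (Real.rpow_pos_of_pos hx c).ne'
    field_simp
  have hL : x ^ p * (1 + t) ^ p = (x + y) ^ p := by
    rw [← Real.mul_rpow hx.le (by linarith : (0:ℝ) ≤ 1 + t)]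
    congr 1
    rw [htd]
    field_simp
  have hyp : x ^ p * t ^ p = y ^ p := by
    rw [← Real.mul_rpow hx.le ht0.le]
    congr 1
    rw [htd]
    field_simp
  have hR : x ^ p * (1 + t ^ p + ∑ n ∈ Finset.Icc 1 ⌊(p+1)/2⌋₊, Cb p n * (t ^ (n:ℝ) + t ^ (p - (n:ℝ)))) =
      x ^ p + y ^ p + ∑ n ∈ Finset.Icc 1 ⌊(p+1)/2⌋₊, Cb p n *
        (x ^ (n : ℝ) * y ^ (p - (n : ℝ)) + x ^ (p - (n : ℝ)) * y ^ (n : ℝ)) := by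
    rw [mul_add, mul_add, mul_one, hyp, Finset.mul_sum]
    congr 1
    apply Finset.sum_congr rfl
    intro n _
    have h1 := hterm (n : ℝ)
    have h2 := hterm (p - (n : ℝ))
    have h3 : p - (p - (n:ℝ)) = (n:ℝ) := by ring
    calc x ^ p * (Cb p n * (t ^ (n:ℝ) + t ^ (p - (n:ℝ))))
        = Cb p n * (x ^ p * t ^ (n:ℝ) + x ^ p * t ^ (p - (n:ℝ))) := by ring
      _ = Cb p n * (x ^ (p - (n:ℝ)) * y ^ (n:ℝ) + x ^ (p - (p - (n:ℝ))) * y ^ (p - (n:ℝ))) := by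
          rw [h1, h2]
      _ = Cb p n * (x ^ (n:ℝ) * y ^ (p - (n:ℝ)) + x ^ (p - (n:ℝ)) * y ^ (n:ℝ)) := by
          rw [h3]; ring
  rw [hL, hR] at hmul
  linarith

theorem polynomial_inequality_I (p : ℝ) (hp : 1 < p) (x y : ℝ) (hx : 0 < x) (hy : 0 < y) :
    (x + y) ^ p - x ^ p - y ^ p ≤
      ∑ n ∈ Finset.Icc 1 (⌊(p + 1) / 2⌋₊),
        ((∏ i ∈ Finset.range n, (p - (i : ℝ))) / (Nat.factorial n : ℝ)) *
          (x ^ (n : ℝ) * y ^ (p - (n : ℝ)) + x ^ (p - (n : ℝ)) * y ^ (n : ℝ)) := by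
  have hCb : ∀ n : ℕ, ((∏ i ∈ Finset.range n, (p - (i : ℝ))) / (Nat.factorial n : ℝ)) = Cb p n :=
    fun n => rfl
  simp only [hCb]
  rcases le_total y x with h | h
  · exact aux_main p hp x y hx hy h
  · have h2 := aux_main p hp y x hy hx h
    calc (x + y) ^ p - x ^ p - y ^ p = (y + x) ^ p - y ^ p - x ^ p := by rw [add_comm x y]; ring
      _ ≤ ∑ n ∈ Finset.Icc 1 (⌊(p + 1) / 2⌋₊), Cb p n *
          (y ^ (n : ℝ) * x ^ (p - (n : ℝ)) + y ^ (p - (n : ℝ)) * x ^ (n : ℝ)) := h2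
      _ = _ := Finset.sum_congr rfl fun n _ => by ring
end

section
/- For γ ∈ (0,2], all v, w ∈ ℝ³ and I, J ∈ [0,∞): |v−w|^γ + ((I+J)/m)^{γ/2} ≥ 2^{γ−2}·(|v|²/2 + I/m)^{γ/2} − 2·(|w|²/2 + J/m)^{γ/2}. -/
open Real

lemma real_rpow_add_le_add_rpow {x y p : ℝ} (hx : 0 ≤ x) (hy : 0 ≤ y)
    (hp : 0 ≤ p) (hp1 : p ≤ 1) : (x + y) ^ p ≤ x ^ p + y ^ p := by
  have h := NNReal.rpow_add_le_add_rpow x.toNNReal y.toNNReal hp hp1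
  have h2 := NNReal.coe_le_coe.2 h
  push_cast at h2
  rwa [Real.coe_toNNReal _ hx, Real.coe_toNNReal _ hy] at h2

theorem lower_bound_integrand (m γ : ℝ) (hm : 0 < m) (hγ : γ ∈ Set.Ioc (0:ℝ) 2)
    (v w : EuclideanSpace ℝ (Fin 3)) (I J : ℝ) (hI : 0 ≤ I) (hJ : 0 ≤ J) :
    (2:ℝ) ^ (γ - 2) * (‖v‖ ^ 2 / 2 + I / m) ^ (γ / 2)
      - 2 * (‖w‖ ^ 2 / 2 + J / m) ^ (γ / 2)
    ≤ ‖v - w‖ ^ γ + ((I + J) / m) ^ (γ / 2) := by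
  obtain ⟨hγ0, hγ2⟩ := hγ
  set r := γ / 2 with hr
  have hr0 : 0 ≤ r := by positivity
  have hr1 : r ≤ 1 := by rw [hr]; linarith
  set a := ‖v‖ ^ 2 / 2 + I / m with ha
  set b := ‖w‖ ^ 2 / 2 + J / m with hb
  set c := ‖v - w‖ ^ 2 with hc
  set d := (I + J) / m with hd
  have ha0 : 0 ≤ a := by positivity
  have hb0 : 0 ≤ b := by positivity
  have hc0 : 0 ≤ c := by positivity
  have hd0 : 0 ≤ d := by positivity
  have hnorm : ‖v‖ ≤ ‖v - w‖ + ‖w‖ := by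
    calc ‖v‖ = ‖(v - w) + w‖ := by rw [sub_add_cancel]
    _ ≤ ‖v - w‖ + ‖w‖ := norm_add_le _ _
  have hkey : a ≤ c + d + 2 * b := by
    have h1 : ‖v‖ ^ 2 ≤ 2 * ‖v - w‖ ^ 2 + 2 * ‖w‖ ^ 2 := by
      nlinarith [hnorm, sq_nonneg (‖v - w‖ - ‖w‖), norm_nonneg v, norm_nonneg (v - w), norm_nonneg w]
    have h2 : I / m ≤ (I + J) / m := by gcongr; linarith
    have hJm : (0:ℝ) ≤ J / m := by positivity
    rw [ha, hc, hd, hb]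
    linarith
  -- subadditivity
  have hsub : a ^ r ≤ c ^ r + d ^ r + (2 * b) ^ r := by
    calc a ^ r ≤ (c + d + 2 * b) ^ r := Real.rpow_le_rpow ha0 hkey hr0
    _ ≤ (c + d) ^ r + (2 * b) ^ r :=
        real_rpow_add_le_add_rpow (by linarith) (by linarith) hr0 hr1
    _ ≤ c ^ r + d ^ r + (2 * b) ^ r := by
        have := real_rpow_add_le_add_rpow hc0 hd0 hr0 hr1
        linarith
  have h2b : (2 * b) ^ r = 2 ^ r * b ^ r := Real.mul_rpow (by norm_num) hb0
  have hcγ : c ^ r = ‖v - w‖ ^ γ := by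
    rw [hc, hr, ← Real.rpow_natCast ‖v - w‖ 2, ← Real.rpow_mul (norm_nonneg _)]
    congr 1
    push_cast; ring
  -- coefficients
  have hco1 : (2:ℝ) ^ (γ - 2) ≤ 1 := by
    calc (2:ℝ) ^ (γ - 2) ≤ 2 ^ (0:ℝ) := by
          apply Real.rpow_le_rpow_of_exponent_le (by norm_num); linarith
    _ = 1 := Real.rpow_zero 2
  have hco2 : (2:ℝ) ^ (γ - 2) * 2 ^ r ≤ 2 := by
    rw [← Real.rpow_add (by norm_num)]
    calc (2:ℝ) ^ (γ - 2 + r) ≤ 2 ^ (1:ℝ) := by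
          apply Real.rpow_le_rpow_of_exponent_le (by norm_num)
          rw [hr]; linarith
    _ = 2 := Real.rpow_one 2
  have hpow2 : (0:ℝ) < (2:ℝ) ^ (γ - 2) := by positivity
  have har : 0 ≤ a ^ r := Real.rpow_nonneg ha0 r
  have hbr : 0 ≤ b ^ r := Real.rpow_nonneg hb0 r
  have hdr : 0 ≤ d ^ r := Real.rpow_nonneg hd0 r
  have hcr : 0 ≤ c ^ r := Real.rpow_nonneg hc0 r
  have hmain : (2:ℝ) ^ (γ - 2) * a ^ r ≤
      c ^ r + d ^ r + 2 * b ^ r := by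
    calc (2:ℝ) ^ (γ - 2) * a ^ r
        ≤ 2 ^ (γ - 2) * (c ^ r + d ^ r + 2 ^ r * b ^ r) := by
          rw [← h2b]; exact mul_le_mul_of_nonneg_left hsub hpow2.le
    _ = 2 ^ (γ - 2) * (c ^ r + d ^ r) + (2 ^ (γ - 2) * 2 ^ r) * b ^ r := by ring
    _ ≤ 1 * (c ^ r + d ^ r) + 2 * b ^ r := by
          gcongr
    _ = c ^ r + d ^ r + 2 * b ^ r := by ring
  rw [← hcγ]
  linarith
end

section
/- For all r, R ∈ [0,1], u ∈ ℝ³, I, I₊ ≥ 0 and γ ∈ (0,2]: R^{γ/2}|u|^γ + (r(1-R)I/m)^{γ/2} + ((1-r)(1-R)I₊/m)^{γ/2} ≤ 2^{1−γ/2}·max{R,1−R}^{γ/2}·(|u|^γ + ((I+I₊)/m)^{γ/2}), and the same quantity is bounded below by min{R,1−R}^{γ/2}·min{r,1−r}^{γ/2}·(|u|^γ + ((I+I₊)/m)^{γ/2}). -/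
open Real

lemma aux_sub' {x y p : ℝ} (hx : 0 ≤ x) (hy : 0 ≤ y) (hp0 : 0 ≤ p) (hp1 : p ≤ 1) :
    (x + y) ^ p ≤ x ^ p + y ^ p := by
  have h := NNReal.rpow_add_le_add_rpow ⟨x, hx⟩ ⟨y, hy⟩ hp0 hp1
  exact_mod_cast h

lemma aux_two' {x y p : ℝ} (hx : 0 ≤ x) (hy : 0 ≤ y) (hp0 : 0 < p) (hp1 : p ≤ 1) :
    x ^ p + y ^ p ≤ 2 ^ (1 - p) * (x + y) ^ p := by
  have hc := (Real.concaveOn_rpow hp0.le hp1).2 (Set.mem_Ici.2 hx) (Set.mem_Ici.2 hy)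
      (by norm_num : (0:ℝ) ≤ 1/2) (by norm_num : (0:ℝ) ≤ 1/2) (by norm_num)
  simp only [smul_eq_mul] at hc
  have hmul : ((1/2:ℝ) * x + (1/2) * y) ^ p = (1/2:ℝ) ^ p * (x + y) ^ p := by
    rw [show (1/2:ℝ) * x + (1/2) * y = (1/2) * (x + y) by ring,
      Real.mul_rpow (by norm_num) (by linarith)]
  have h2 : (2:ℝ) ^ (1 - p) = 2 * (1/2:ℝ) ^ p := by
    rw [Real.rpow_sub two_pos, Real.rpow_one, one_div,
      Real.inv_rpow (by norm_num : (0:ℝ) ≤ 2), div_eq_mul_inv]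
  rw [hmul] at hc
  rw [h2]
  nlinarith [Real.rpow_nonneg (by linarith : (0:ℝ) ≤ x + y) p]

theorem model3_two_sided_bound (m γ : ℝ) (hm : 0 < m) (hγ : γ ∈ Set.Ioc (0:ℝ) 2)
    (r R : ℝ) (hr : r ∈ Set.Icc (0:ℝ) 1) (hR : R ∈ Set.Icc (0:ℝ) 1)
    (u : EuclideanSpace ℝ (Fin 3)) (I Is : ℝ) (hI : 0 ≤ I) (hIs : 0 ≤ Is) :
    R ^ (γ / 2) * ‖u‖ ^ γ + (r * (1 - R) * I / m) ^ (γ / 2)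
        + ((1 - r) * (1 - R) * Is / m) ^ (γ / 2) ≤
      (2:ℝ) ^ (1 - γ / 2) * (max R (1 - R)) ^ (γ / 2) *
        (‖u‖ ^ γ + ((I + Is) / m) ^ (γ / 2)) ∧
    (min R (1 - R)) ^ (γ / 2) * (min r (1 - r)) ^ (γ / 2) *
        (‖u‖ ^ γ + ((I + Is) / m) ^ (γ / 2)) ≤
      R ^ (γ / 2) * ‖u‖ ^ γ + (r * (1 - R) * I / m) ^ (γ / 2)
        + ((1 - r) * (1 - R) * Is / m) ^ (γ / 2) := by
  obtain ⟨hγ0, hγ2⟩ := hγ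
  obtain ⟨hr0, hr1⟩ := hr
  obtain ⟨hR0, hR1⟩ := hR
  set p : ℝ := γ / 2 with hp
  have hp0 : 0 < p := by positivity
  have hp1 : p ≤ 1 := by simp only [hp]; linarith
  have hR1' : (0:ℝ) ≤ 1 - R := by linarith
  have hr1' : (0:ℝ) ≤ 1 - r := by linarith
  have hA : 0 ≤ ‖u‖ ^ γ := Real.rpow_nonneg (norm_nonneg u) γ
  have hIm : 0 ≤ (I + Is) / m := by positivity
  have hB : 0 ≤ ((I + Is) / m) ^ p := Real.rpow_nonneg hIm p
  have hmaxR : 0 ≤ max R (1 - R) := le_max_of_le_left hR0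
  have hmaxp : 0 ≤ (max R (1 - R)) ^ p := Real.rpow_nonneg hmaxR p
  have hx1 : 0 ≤ r * (1 - R) * I / m := by positivity
  have hx2 : 0 ≤ (1 - r) * (1 - R) * Is / m := by positivity
  have h2p : (1:ℝ) ≤ 2 ^ (1 - p) :=
    Real.one_le_rpow one_le_two (by linarith)
  constructor
  · -- upper bound
    have hterm1 : R ^ p * ‖u‖ ^ γ ≤ (max R (1 - R)) ^ p * ‖u‖ ^ γ :=
      mul_le_mul_of_nonneg_right (Real.rpow_le_rpow hR0 (le_max_left _ _) hp0.le) hA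
    have htermI : (r * (1 - R) * I / m) ^ p + ((1 - r) * (1 - R) * Is / m) ^ p ≤
        2 ^ (1 - p) * ((max R (1 - R)) ^ p * ((I + Is) / m) ^ p) := by
      have h1 := aux_two' hx1 hx2 hp0 hp1
      have hmx : 1 - R ≤ max R (1 - R) := le_max_right _ _
      have hnum : (1 - R) * (r * I + (1 - r) * Is) ≤ max R (1 - R) * (I + Is) := by
        nlinarith [mul_nonneg hR1' (mul_nonneg hr1' hI), mul_nonneg hR1' (mul_nonneg hr0 hIs)]
      have hsum : r * (1 - R) * I / m + (1 - r) * (1 - R) * Is / m ≤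
          max R (1 - R) * ((I + Is) / m) := by
        calc r * (1 - R) * I / m + (1 - r) * (1 - R) * Is / m
            = ((1 - R) * (r * I + (1 - r) * Is)) / m := by ring
          _ ≤ (max R (1 - R) * (I + Is)) / m := by gcongr
          _ = max R (1 - R) * ((I + Is) / m) := by ring
      have h2 : (r * (1 - R) * I / m + (1 - r) * (1 - R) * Is / m) ^ p ≤
          (max R (1 - R) * ((I + Is) / m)) ^ p :=
        Real.rpow_le_rpow (by positivity) hsum hp0.le
      rw [Real.mul_rpow hmaxR hIm] at h2
      calc (r * (1 - R) * I / m) ^ p + ((1 - r) * (1 - R) * Is / m) ^ p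
          ≤ 2 ^ (1 - p) * (r * (1 - R) * I / m + (1 - r) * (1 - R) * Is / m) ^ p := h1
        _ ≤ 2 ^ (1 - p) * ((max R (1 - R)) ^ p * ((I + Is) / m) ^ p) :=
            mul_le_mul_of_nonneg_left h2 (by positivity)
    have hterm1' : R ^ p * ‖u‖ ^ γ ≤ 2 ^ (1 - p) * ((max R (1 - R)) ^ p * ‖u‖ ^ γ) := by
      nlinarith [mul_nonneg hmaxp hA]
    calc R ^ p * ‖u‖ ^ γ + (r * (1 - R) * I / m) ^ p + ((1 - r) * (1 - R) * Is / m) ^ p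
        ≤ 2 ^ (1 - p) * ((max R (1 - R)) ^ p * ‖u‖ ^ γ)
          + 2 ^ (1 - p) * ((max R (1 - R)) ^ p * ((I + Is) / m) ^ p) := by
          linarith
      _ = 2 ^ (1 - p) * (max R (1 - R)) ^ p * (‖u‖ ^ γ + ((I + Is) / m) ^ p) := by ring
  · -- lower bound
    have hminR : 0 ≤ min R (1 - R) := le_min hR0 hR1'
    have hminr : 0 ≤ min r (1 - r) := le_min hr0 hr1'
    have hminRp : 0 ≤ (min R (1 - R)) ^ p := Real.rpow_nonneg hminR p
    have hminrp1 : (min r (1 - r)) ^ p ≤ 1 :=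
      Real.rpow_le_one hminr (le_trans (min_le_left _ _) hr1) hp0.le
    have hminrp : 0 ≤ (min r (1 - r)) ^ p := Real.rpow_nonneg hminr p
    have hRp : 0 ≤ R ^ p := Real.rpow_nonneg hR0 p
    have hterm1 : (min R (1 - R)) ^ p * (min r (1 - r)) ^ p * ‖u‖ ^ γ ≤
        R ^ p * ‖u‖ ^ γ := by
      have h1 : (min R (1 - R)) ^ p ≤ R ^ p :=
        Real.rpow_le_rpow hminR (min_le_left _ _) hp0.le
      have h2 : (min R (1 - R)) ^ p * (min r (1 - r)) ^ p ≤ R ^ p * 1 :=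
        mul_le_mul h1 hminrp1 hminrp hRp
      rw [mul_one] at h2
      exact mul_le_mul_of_nonneg_right h2 hA
    have htermI : (min R (1 - R)) ^ p * (min r (1 - r)) ^ p * ((I + Is) / m) ^ p ≤
        (r * (1 - R) * I / m) ^ p + ((1 - r) * (1 - R) * Is / m) ^ p := by
      have hsplit : ((I + Is) / m) ^ p ≤ (I / m) ^ p + (Is / m) ^ p := by
        rw [show (I + Is) / m = I / m + Is / m by ring]
        exact aux_sub' (by positivity) (by positivity) hp0.le hp1
      have hcp : 0 ≤ min R (1 - R) * min r (1 - r) := mul_nonneg hminR hminr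
      have hkey1 : (min R (1 - R)) ^ p * (min r (1 - r)) ^ p * (I / m) ^ p ≤
          (r * (1 - R) * I / m) ^ p := by
        have hbase : min R (1 - R) * min r (1 - r) * (I / m) ≤ r * (1 - R) * I / m := by
          have h : min R (1 - R) * min r (1 - r) ≤ (1 - R) * r :=
            mul_le_mul (min_le_right _ _) (min_le_left _ _) hminr hR1'
          calc min R (1 - R) * min r (1 - r) * (I / m)
              ≤ (1 - R) * r * (I / m) :=
                mul_le_mul_of_nonneg_right h (div_nonneg hI hm.le)
            _ = r * (1 - R) * I / m := by ring
        calc (min R (1 - R)) ^ p * (min r (1 - r)) ^ p * (I / m) ^ p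
            = (min R (1 - R) * min r (1 - r) * (I / m)) ^ p := by
              rw [Real.mul_rpow hcp (by positivity), Real.mul_rpow hminR hminr]
          _ ≤ (r * (1 - R) * I / m) ^ p :=
              Real.rpow_le_rpow (by positivity) hbase hp0.le
      have hkey2 : (min R (1 - R)) ^ p * (min r (1 - r)) ^ p * (Is / m) ^ p ≤
          ((1 - r) * (1 - R) * Is / m) ^ p := by
        have hbase : min R (1 - R) * min r (1 - r) * (Is / m) ≤ (1 - r) * (1 - R) * Is / m := by
          have h : min R (1 - R) * min r (1 - r) ≤ (1 - R) * (1 - r) :=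
            mul_le_mul (min_le_right _ _) (min_le_right _ _) hminr hR1'
          calc min R (1 - R) * min r (1 - r) * (Is / m)
              ≤ (1 - R) * (1 - r) * (Is / m) :=
                mul_le_mul_of_nonneg_right h (div_nonneg hIs hm.le)
            _ = (1 - r) * (1 - R) * Is / m := by ring
        calc (min R (1 - R)) ^ p * (min r (1 - r)) ^ p * (Is / m) ^ p
            = (min R (1 - R) * min r (1 - r) * (Is / m)) ^ p := by
              rw [Real.mul_rpow hcp (by positivity), Real.mul_rpow hminR hminr]
          _ ≤ ((1 - r) * (1 - R) * Is / m) ^ p :=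
              Real.rpow_le_rpow (by positivity) hbase hp0.le
      calc (min R (1 - R)) ^ p * (min r (1 - r)) ^ p * ((I + Is) / m) ^ p
          ≤ (min R (1 - R)) ^ p * (min r (1 - r)) ^ p * ((I / m) ^ p + (Is / m) ^ p) :=
            mul_le_mul_of_nonneg_left hsplit (mul_nonneg hminRp hminrp)
        _ = (min R (1 - R)) ^ p * (min r (1 - r)) ^ p * (I / m) ^ p
            + (min R (1 - R)) ^ p * (min r (1 - r)) ^ p * (Is / m) ^ p := by ring
        _ ≤ (r * (1 - R) * I / m) ^ p + ((1 - r) * (1 - R) * Is / m) ^ p := by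
            linarith
    calc (min R (1 - R)) ^ p * (min r (1 - r)) ^ p * (‖u‖ ^ γ + ((I + Is) / m) ^ p)
        = (min R (1 - R)) ^ p * (min r (1 - r)) ^ p * ‖u‖ ^ γ
          + (min R (1 - R)) ^ p * (min r (1 - r)) ^ p * ((I + Is) / m) ^ p := by ring
      _ ≤ R ^ p * ‖u‖ ^ γ + ((r * (1 - R) * I / m) ^ p + ((1 - r) * (1 - R) * Is / m) ^ p) := by
          linarith
      _ = R ^ p * ‖u‖ ^ γ + (r * (1 - R) * I / m) ^ p + ((1 - r) * (1 - R) * Is / m) ^ p := by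
          ring
end
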